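/- Let f : ℝ≥0 → ℝ≥0 be continuous with f(0) = 0 and compact support, h > 0, and let t_n, s_n denote the n-th returning and exit times of Λ_{0,h}(f) at level 0. Then for all indices 1 ≤ i < j with t_j < ∞, one has f(t_i) = f_h(t_i), f(s_i) = f_h(s_i), and inf_{[t_i, t_j]} f = inf_{[t_i, t_j]} f_h, where f_h = f − Λ_{0,h}(f). In the trees coded by f and f_h, this means the heights of the i-th leaf and the heights of the most recent common ancestor of the i-th and j-th leaves agree. -/

import Mathlib

open Set
open scoped NNReal ENNReal

/-- Solution data for the two-sided Skorohod reflection problem of `f` on `[0,h]`: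
`c0` and `ch` are the compensators at `0` and at `h`,
and `fun t => f t + ch t + c0 t` is the reflected path `Λ_{0,h}(f)`.
The support conditions on the measures `dc⁰` and `d(−cʰ)` are phrased as:
the compensator is constant on every (closed) interval on which the reflected
path avoids the corresponding boundary. -/
structure SkorohodPair (h : ℝ) (f c0 ch : ℝ≥0 → ℝ) : Prop where
  cont0 : Continuous c0
  conth : Continuous ch
  init0 : c0 0 = 0
  inith : ch 0 = 0
  mem_Icc : ∀ t, f t + ch t + c0 t ∈ Set.Icc (0 : ℝ) h
  mono0 : Monotone c0
  antih : Antitone ch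
  flat0 : ∀ a b : ℝ≥0, a ≤ b → (∀ t ∈ Set.Icc a b, f t + ch t + c0 t ≠ 0) → c0 b = c0 a
  flath : ∀ a b : ℝ≥0, a ≤ b → (∀ t ∈ Set.Icc a b, f t + ch t + c0 t ≠ h) → ch b = ch a

/-- `eInf S` : infimum of a set of times, in `ℝ≥0∞`, with the convention `inf ∅ = ∞`. -/
noncomputable def eInf (S : Set ℝ≥0) : ℝ≥0∞ := sInf ((fun x : ℝ≥0 => (x : ℝ≥0∞)) '' S)

/-- `eSup S` : supremum of a set of times, in `ℝ≥0∞`. -/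
noncomputable def eSup (S : Set ℝ≥0) : ℝ≥0∞ := sSup ((fun x : ℝ≥0 => (x : ℝ≥0∞)) '' S)

/-- `inf_{[a,s]} f`, where the left endpoint `a` may be infinite. -/
noncomputable def infBetween (f : ℝ≥0 → ℝ) (a : ℝ≥0∞) (s : ℝ≥0) : ℝ :=
  sInf (f '' {u : ℝ≥0 | a ≤ (u : ℝ≥0∞) ∧ u ≤ s})

/-- `sup_{[a,s]} f`, where the left endpoint `a` may be infinite. -/
noncomputable def supBetween (f : ℝ≥0 → ℝ) (a : ℝ≥0∞) (s : ℝ≥0) : ℝ :=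
  sSup (f '' {u : ℝ≥0 | a ≤ (u : ℝ≥0∞) ∧ u ≤ s})

/-- `θ_{n+1} = inf {s > τ_n : f s − h = inf_{[τ_n,s]} f}`. -/
noncomputable def thetaNext (h : ℝ) (f : ℝ≥0 → ℝ) (τ : ℝ≥0∞) : ℝ≥0∞ :=
  eInf {s : ℝ≥0 | τ < (s : ℝ≥0∞) ∧ f s - h = infBetween f τ s}

/-- `τ_{n+1} = inf {s > θ_{n+1} : sup_{[θ_{n+1},s]} f = f s + h}`. -/
noncomputable def tauNext (h : ℝ) (f : ℝ≥0 → ℝ) (τ : ℝ≥0∞) : ℝ≥0∞ :=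
  eInf {s : ℝ≥0 | thetaNext h f τ < (s : ℝ≥0∞) ∧
    supBetween f (thetaNext h f τ) s = f s + h}

/-- The sequence `(τ_n)` of completion times of the sub-excursions of height `h`. -/
noncomputable def tauSeq (h : ℝ) (f : ℝ≥0 → ℝ) : ℕ → ℝ≥0∞
  | 0 => 0
  | n + 1 => tauNext h f (tauSeq h f n)

/-- `σ_{n+1} = sup {s ∈ [τ_n, τ_{n+1}] : f s = inf_{[τ_n,s]} f}` (and `σ₀ = 0`). -/
noncomputable def sigmaSeq (h : ℝ) (f : ℝ≥0 → ℝ) : ℕ → ℝ≥0∞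
  | 0 => 0
  | n + 1 => eSup {s : ℝ≥0 | tauSeq h f n ≤ (s : ℝ≥0∞) ∧ (s : ℝ≥0∞) ≤ tauSeq h f (n + 1) ∧
      f s = infBetween f (tauSeq h f n) s}

/-- The returning times of a path `Λ` to level `0` after visiting level `h`:
`t₀ = 0`, `T_{n+1} = inf {u > t_n : Λ u = h}`, `t_{n+1} = inf {u > T_{n+1} : Λ u = 0}`. -/
noncomputable def retSeq (h : ℝ) (Λ : ℝ≥0 → ℝ) : ℕ → ℝ≥0∞
  | 0 => 0
  | n + 1 =>
      eInf {u : ℝ≥0 |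
        eInf {v : ℝ≥0 | retSeq h Λ n < (v : ℝ≥0∞) ∧ Λ v = h} < (u : ℝ≥0∞) ∧ Λ u = 0}

/-- The exit times of `Λ` at level `0`: `s_{n+1} = sup {u ∈ [t_n, t_{n+1}) : Λ u = 0}`. -/
noncomputable def exitSeq (h : ℝ) (Λ : ℝ≥0 → ℝ) : ℕ → ℝ≥0∞
  | 0 => 0
  | n + 1 => eSup {u : ℝ≥0 | retSeq h Λ n ≤ (u : ℝ≥0∞) ∧ (u : ℝ≥0∞) < retSeq h Λ (n + 1) ∧
      Λ u = 0}

/-!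
The times `t_i` and `s_i` are limits of zeros of the continuous path `Λ` (or `0`), so `Λ` vanishes
there and `f = f_h`. For the infima, `f_h = f - Λ ≤ f` since `Λ ≥ 0`; conversely, for `u ≥ t_i`
let `v` be the last zero of `Λ` in `[t_i, u]`. On `(v, u]` the lower compensator is flat, so by
continuity `c⁰ v = c⁰ u`, while `cʰ` is nonincreasing; hence `f v = f_h v = -(cʰ v + c⁰ v) ≤ f_h u`.
-/

lemma mem_of_coe_eq_eInf {C S : Set ℝ≥0} (hC : IsClosed C) (hSC : S ⊆ C) {t : ℝ≥0}
    (ht : (t : ℝ≥0∞) = eInf S) : t ∈ C := by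
  rcases S.eq_empty_or_nonempty with rfl | hS
  · simp [eInf] at ht
  rw [eInf, sInf_image, ← ENNReal.coe_sInf hS, ENNReal.coe_inj] at ht
  exact hC.closure_subset_iff.2 hSC (ht ▸ csInf_mem_closure hS (OrderBot.bddBelow S))

lemma mem_of_coe_eq_eSup {C S : Set ℝ≥0} (hC : IsClosed C) (h0 : 0 ∈ C) (hSC : S ⊆ C)
    {t : ℝ≥0} (ht : (t : ℝ≥0∞) = eSup S) : t ∈ C := by
  rcases S.eq_empty_or_nonempty with rfl | hS
  · simp_all [eSup]
  have hbdd : BddAbove S := ⟨t, fun u hu =>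
    ENNReal.coe_le_coe.1 ((le_sSup ⟨u, hu, rfl⟩ : (u : ℝ≥0∞) ≤ eSup S).trans_eq ht.symm)⟩
  rw [eSup, sSup_image, ← ENNReal.coe_sSup hbdd, ENNReal.coe_inj] at ht
  exact hC.closure_subset_iff.2 hSC (ht ▸ csSup_mem_closure hS hbdd)

section ZeroSet

variable {h : ℝ} {Λ : ℝ≥0 → ℝ} (hΛ : Continuous Λ) (hΛ0 : Λ 0 = 0) {t : ℝ≥0}
include hΛ hΛ0

lemma apply_eq_zero_of_coe_eq_retSeq {n : ℕ} (ht : (t : ℝ≥0∞) = retSeq h Λ n) : Λ t = 0 := by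
  cases n with
  | zero => rwa [ENNReal.coe_eq_zero.1 ht]
  | succ n =>
    exact mem_of_coe_eq_eInf (C := {u | Λ u = 0}) (isClosed_eq hΛ continuous_const)
      (fun _ hu => hu.2) ht

lemma apply_eq_zero_of_coe_eq_exitSeq {n : ℕ} (ht : (t : ℝ≥0∞) = exitSeq h Λ n) : Λ t = 0 := by
  cases n with
  | zero => rwa [ENNReal.coe_eq_zero.1 ht]
  | succ n =>
    exact mem_of_coe_eq_eSup (C := {u | Λ u = 0}) (isClosed_eq hΛ continuous_const) hΛ0
      (fun _ hu => hu.2.2) ht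

end ZeroSet

lemma sInf_image_eq_of_forall_exists_le {α : Type*} {s : Set α} {f g : α → ℝ}
    (hg : BddBelow (g '' s)) (hgf : ∀ x ∈ s, g x ≤ f x) (hfg : ∀ x ∈ s, ∃ y ∈ s, f y ≤ g x) :
    sInf (f '' s) = sInf (g '' s) := by
  rcases s.eq_empty_or_nonempty with rfl | hs
  · simp
  have hf : BddBelow (f '' s) := by
    obtain ⟨m, hm⟩ := hg
    exact ⟨m, by rintro _ ⟨x, hx, rfl⟩; exact (hm ⟨x, hx, rfl⟩).trans (hgf x hx)⟩
  refine le_antisymm (le_csInf (hs.image g) ?_) (le_csInf (hs.image f) ?_)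
  · rintro _ ⟨x, hx, rfl⟩
    obtain ⟨y, hy, hyx⟩ := hfg x hx
    exact (csInf_le hf ⟨y, hy, rfl⟩).trans hyx
  · rintro _ ⟨x, hx, rfl⟩
    exact (csInf_le hg ⟨x, hx, rfl⟩).trans (hgf x hx)

namespace SkorohodPair

variable {h : ℝ} {f c0 ch : ℝ≥0 → ℝ} (hp : SkorohodPair h f c0 ch)
include hp

lemma continuous_reflection (hf : Continuous f) : Continuous fun t => f t + ch t + c0 t :=
  (hf.add hp.conth).add hp.cont0

lemma c0_eq_of_ne_zero_on_Ioc {v u : ℝ≥0} (hvu : v ≤ u)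
    (hne : ∀ t ∈ Ioc v u, f t + ch t + c0 t ≠ 0) : c0 v = c0 u := by
  rcases hvu.eq_or_lt with rfl | hlt
  · rfl
  have hflat : Ioc v u ⊆ {a | c0 a = c0 u} := fun a ha =>
    (hp.flat0 a u ha.2 fun t ht => hne t ⟨ha.1.trans_le ht.1, ht.2⟩).symm
  have hv : v ∈ closure (Ioc v u) := by
    rw [closure_Ioc hlt.ne]; exact left_mem_Icc.2 hvu
  exact (isClosed_eq hp.cont0 continuous_const).closure_subset_iff.2 hflat hv

lemma exists_zero_le_sub (hf : Continuous f) {a u : ℝ≥0} (ha : f a + ch a + c0 a = 0)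
    (hau : a ≤ u) :
    ∃ v ∈ Icc a u, f v + ch v + c0 v = 0 ∧ f v ≤ f u - (f u + ch u + c0 u) := by
  set Z := Icc a u ∩ {t | f t + ch t + c0 t = 0}
  have hZ : IsCompact Z :=
    isCompact_Icc.inter_right (isClosed_eq (hp.continuous_reflection hf) continuous_const)
  obtain ⟨v, ⟨hv, hv0⟩, hvmax⟩ := hZ.exists_isGreatest ⟨a, ⟨le_rfl, hau⟩, ha⟩
  have hc0 : c0 v = c0 u := hp.c0_eq_of_ne_zero_on_Ioc hv.2 fun t ht ht0 =>
    (hvmax ⟨⟨hv.1.trans ht.1.le, ht.2⟩, ht0⟩).not_gt ht.1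
  have hch : ch u ≤ ch v := hp.antih hv.2
  exact ⟨v, hv, hv0, by simp only [mem_ofPred_eq] at hv0; linarith⟩

lemma sInf_image_Icc_sub_eq (hf : Continuous f) {a : ℝ≥0} (ha : f a + ch a + c0 a = 0)
    (b : ℝ≥0) :
    sInf (f '' Icc a b) = sInf ((fun u => f u - (f u + ch u + c0 u)) '' Icc a b) := by
  refine sInf_image_eq_of_forall_exists_le
    (isCompact_Icc.image (hf.sub (hp.continuous_reflection hf))).bddBelow
    (fun u _ => by linarith [(hp.mem_Icc u).1]) fun u hu => ?_
  obtain ⟨v, hv, -, hvu⟩ := hp.exists_zero_le_sub hf ha hu.1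
  exact ⟨v, ⟨hv.1, hv.2.trans hu.2⟩, hvu⟩

end SkorohodPair

theorem heights_agree_under_h_cut_general
    (h : ℝ) (f c0 ch : ℝ≥0 → ℝ) (hf : Continuous f)
    (hf0 : f 0 = 0)
    (hp : SkorohodPair h f c0 ch)
    (Λ : ℝ≥0 → ℝ) (hΛ : ∀ t, Λ t = f t + ch t + c0 t)
    (i : ℕ)
    (ti tj si : ℝ≥0)
    (hti : (ti : ℝ≥0∞) = retSeq h Λ i)
    (hsi : (si : ℝ≥0∞) = exitSeq h Λ i) :
    f ti = f ti - Λ ti ∧ f si = f si - Λ si ∧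
    sInf (f '' Set.Icc ti tj) = sInf ((fun u => f u - Λ u) '' Set.Icc ti tj) := by
  obtain rfl : Λ = fun t => f t + ch t + c0 t := funext hΛ
  have hΛc : Continuous fun t => f t + ch t + c0 t := hp.continuous_reflection hf
  have hΛ0 : f 0 + ch 0 + c0 0 = 0 := by rw [hf0, hp.inith, hp.init0]; ring
  have hΛti := apply_eq_zero_of_coe_eq_retSeq hΛc hΛ0 hti
  have hΛsi := apply_eq_zero_of_coe_eq_exitSeq hΛc hΛ0 hsi
  exact ⟨(sub_eq_self.2 hΛti).symm, (sub_eq_self.2 hΛsi).symm, hp.sInf_image_Icc_sub_eq hf hΛti tj⟩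

/-- **Heights of leaves and of most recent common ancestors agree in `T_f` and `T_{f_h}`**:
for `1 ≤ i < j` with `t_j < ∞` (here `t_i, t_j, s_i` are given as finite times whose
coercions equal the returning/exit times of `Λ = Λ_{0,h}(f)` at level `0`),
`f(t_i) = f_h(t_i)`, `f(s_i) = f_h(s_i)` and `inf_{[t_i,t_j]} f = inf_{[t_i,t_j]} f_h`,
where `f_h = f − Λ`. -/
theorem heights_agree_under_h_cut
    (h : ℝ) (hh : 0 < h) (f c0 ch : ℝ≥0 → ℝ) (hf : Continuous f)
    (hpos : ∀ t, 0 ≤ f t) (hf0 : f 0 = 0) (K : ℝ≥0) (hK : ∀ t, K ≤ t → f t = 0)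
    (hp : SkorohodPair h f c0 ch)
    (Λ : ℝ≥0 → ℝ) (hΛ : ∀ t, Λ t = f t + ch t + c0 t)
    (i j : ℕ) (hi : 1 ≤ i) (hij : i < j)
    (ti tj si : ℝ≥0)
    (hti : (ti : ℝ≥0∞) = retSeq h Λ i)
    (htj : (tj : ℝ≥0∞) = retSeq h Λ j)
    (hsi : (si : ℝ≥0∞) = exitSeq h Λ i) :
    f ti = f ti - Λ ti ∧ f si = f si - Λ si ∧
    sInf (f '' Set.Icc ti tj) = sInf ((fun u => f u - Λ u) '' Set.Icc ti tj) :=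
  heights_agree_under_h_cut_general h f c0 ch hf hf0 hp Λ hΛ i ti tj si hti hsi
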